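/- Lemma 3 of the main theorem (a pure R-matrix identity): let R: ℂ^N → End(ℂ^N⊗ℂ^N) satisfy the zero-weight condition, the translation condition, and the dynamical Yang–Baxter equation (hypotheses (i)–(iii)). Fix n, m ≥ 1 and work on (ℂ^N)^{⊗(n+m)}. For 1 ≤ i ≤ n define Q_i(x) := Π_{j=m}^{1} R_{i,n+j}(x − 2γh^{(i+1,n)} − 2γh^{(n+j+1,n+m)}) (the product ordered left to right with j decreasing from m to 1), and for 1 ≤ i ≤ n+1 define T_i(x) := ℐ^{(n+1,n+m)}(x−2γh^{(i,n)}), where ℐ^{(k,l)}(x) := R̂_{k,k+1}(x−2γh^{(k+2,l)}) R̂_{k+1,k+2}(x−2γh^{(k+3,l)}) ⋯ R̂_{l−1,l}(x) and T_{n+1}(x) = ℐ^{(n+1,n+m)}(x). Then for every x ∈ ℂ^N and every i with 1 ≤ i ≤ n: T_i(x) Q_i(x) = Q_i(x) T_{i+1}(x). -/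

import Mathlib

noncomputable section
open Matrix Complex
open scoped BigOperators

variable (N : ℕ) (γ : ℂ)

/-- S placed in factors 1,2 of (ℂ^N)^{⊗3}, argument shifted by s·h^{(3)} -/
def sh12 (S : (Fin N → ℂ) → Matrix (Fin N × Fin N) (Fin N × Fin N) ℂ)
    (x : Fin N → ℂ) (s : ℂ) :
    Matrix (Fin N × Fin N × Fin N) (Fin N × Fin N × Fin N) ℂ :=
  fun p q => if p.2.2 = q.2.2 then
    S (x + s • (Pi.single q.2.2 1 : Fin N → ℂ)) (p.1, p.2.1) (q.1, q.2.1) else 0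

def sh13 (S : (Fin N → ℂ) → Matrix (Fin N × Fin N) (Fin N × Fin N) ℂ)
    (x : Fin N → ℂ) (s : ℂ) :
    Matrix (Fin N × Fin N × Fin N) (Fin N × Fin N × Fin N) ℂ :=
  fun p q => if p.2.1 = q.2.1 then
    S (x + s • (Pi.single q.2.1 1 : Fin N → ℂ)) (p.1, p.2.2) (q.1, q.2.2) else 0

def sh23 (S : (Fin N → ℂ) → Matrix (Fin N × Fin N) (Fin N × Fin N) ℂ)
    (x : Fin N → ℂ) (s : ℂ) :
    Matrix (Fin N × Fin N × Fin N) (Fin N × Fin N × Fin N) ℂ :=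
  fun p q => if p.1 = q.1 then
    S (x + s • (Pi.single q.1 1 : Fin N → ℂ)) (p.2.1, p.2.2) (q.2.1, q.2.2) else 0

/-- the dynamical Yang–Baxter equation for R (no spectral parameter) -/
def DYBE (R : (Fin N → ℂ) → Matrix (Fin N × Fin N) (Fin N × Fin N) ℂ) : Prop :=
  ∀ x : Fin N → ℂ,
    sh12 N R x γ * sh13 N R x (-γ) * sh23 N R x γ =
    sh23 N R x (-γ) * sh13 N R x γ * sh12 N R x (-γ)

/-- zero-weight condition on R -/
def ZeroWeight (R : (Fin N → ℂ) → Matrix (Fin N × Fin N) (Fin N × Fin N) ℂ) : Prop :=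
  ∀ x : Fin N → ℂ, ∀ i j k l : Fin N,
    (Pi.single i 1 : Fin N → ℂ) + Pi.single j 1 ≠
      (Pi.single k 1 : Fin N → ℂ) + Pi.single l 1 →
    R x (i, j) (k, l) = 0

/-- translation condition on R -/
def TransInv (R : (Fin N → ℂ) → Matrix (Fin N × Fin N) (Fin N × Fin N) ℂ) : Prop :=
  ∀ x : Fin N → ℂ, ∀ t : ℂ, ∀ i j k l : Fin N,
    R (x + t • ((Pi.single i 1 : Fin N → ℂ) + Pi.single j 1)) (i, j) (k, l) =
      R x (i, j) (k, l)

/-- δ_{σ(s)} + … + δ_{σ(t−1)} : sum of basis vectors carried by the factors with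
    0-based positions in [s,t); this realizes the dynamical shift h^{(s+1,t)}
    (1-based labels) -/
def hsum (p : ℕ) (s t : ℕ) (σ : Fin p → Fin N) : Fin N → ℂ :=
  ∑ i : Fin p, if s ≤ (i : ℕ) ∧ (i : ℕ) < t then (Pi.single (σ i) 1 : Fin N → ℂ) else 0

/-- R placed in (0-based) factors a, b of (ℂ^N)^{⊗p}, with σ-dependent
    evaluation point `f σ` (the dynamical shift) -/
def RPair (R : (Fin N → ℂ) → Matrix (Fin N × Fin N) (Fin N × Fin N) ℂ)
    (p : ℕ) (a b : ℕ) (f : (Fin p → Fin N) → Fin N → ℂ) :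
    Matrix (Fin p → Fin N) (Fin p → Fin N) ℂ :=
  if h : a < p ∧ b < p then
    Matrix.of fun σ σ' =>
      if ∀ i : Fin p, (i : ℕ) ≠ a → (i : ℕ) ≠ b → σ i = σ' i then
        R (f σ) (σ ⟨a, h.1⟩, σ ⟨b, h.2⟩) (σ' ⟨a, h.1⟩, σ' ⟨b, h.2⟩)
      else 0
  else 1

/-- R̂ = P·R placed in (0-based) factors a, b -/
def RhatPair (R : (Fin N → ℂ) → Matrix (Fin N × Fin N) (Fin N × Fin N) ℂ)
    (p : ℕ) (a b : ℕ) (f : (Fin p → Fin N) → Fin N → ℂ) :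
    Matrix (Fin p → Fin N) (Fin p → Fin N) ℂ :=
  if h : a < p ∧ b < p then
    Matrix.of fun σ σ' =>
      if ∀ i : Fin p, (i : ℕ) ≠ a → (i : ℕ) ≠ b → σ i = σ' i then
        R (f σ) (σ ⟨b, h.2⟩, σ ⟨a, h.1⟩) (σ' ⟨a, h.1⟩, σ' ⟨b, h.2⟩)
      else 0
  else 1

/-- 𝓘^{(k,l)} (1-based labels k..l):
    R̂_{k,k+1}(·−2γh^{(k+2,l)}) R̂_{k+1,k+2}(·−2γh^{(k+3,l)}) ⋯ R̂_{l−1,l}(·),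
    where `base σ` is the evaluation point (allowing σ-dependent shifts) -/
def calI (R : (Fin N → ℂ) → Matrix (Fin N × Fin N) (Fin N × Fin N) ℂ)
    (p : ℕ) (k l : ℕ) (base : (Fin p → Fin N) → Fin N → ℂ) :
    Matrix (Fin p → Fin N) (Fin p → Fin N) ℂ :=
  ((List.range' k (l - k)).map (fun j =>
    RhatPair N R p (j - 1) j
      (fun σ => base σ - (2 * γ) • hsum N p (j + 1) l σ))).prod

/-- Q_i(x) = Π_{j=m}^{1} R_{i,n+j}(x − 2γh^{(i+1,n)} − 2γh^{(n+j+1,n+m)}),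
    1-based label i, on (ℂ^N)^{⊗(n+m)} -/
def Qmat (R : (Fin N → ℂ) → Matrix (Fin N × Fin N) (Fin N × Fin N) ℂ)
    (n m : ℕ) (i : ℕ) (x : Fin N → ℂ) :
    Matrix (Fin (n + m) → Fin N) (Fin (n + m) → Fin N) ℂ :=
  (((List.range' 1 m).reverse).map (fun j =>
    RPair N R (n + m) (i - 1) (n + j - 1)
      (fun σ => x - (2 * γ) • hsum N (n + m) i n σ
                  - (2 * γ) • hsum N (n + m) (n + j) (n + m) σ))).prod

/-- T_i(x) = 𝓘^{(n+1,n+m)}(x − 2γ h^{(i,n)}) -/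
def Tmat (R : (Fin N → ℂ) → Matrix (Fin N × Fin N) (Fin N × Fin N) ℂ)
    (n m : ℕ) (i : ℕ) (x : Fin N → ℂ) :
    Matrix (Fin (n + m) → Fin N) (Fin (n + m) → Fin N) ℂ :=
  calI N γ R (n + m) (n + 1) (n + m)
    (fun σ => x - (2 * γ) • hsum N (n + m) (i - 1) n σ)

/-!
`T_i` is the product of the factors `R̂_{j,j+1}` (`n < j < n+m`) and `Q_i` the product of the
factors `R_{i,n+j}`, so it suffices to move each factor of `T_i` through `Q_i`, where it must
become the corresponding factor of `T_{i+1}`. It commutes with the factors of `Q_i` acting on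
other sites: by the zero-weight condition their entries only connect configurations of equal pair
weight, and the dynamical shifts of the other factor only see that weight. With the two factors
`R_{i,j+1} R_{i,j}` sharing its sites it satisfies the dynamical Yang–Baxter equation in the
hexagon form `R̂_{23} R_{13} R_{12} = R_{13} R_{12} R̂_{23}`, and the shift by `h^{(i)}` in
`R̂_{23}` drops out. The shifts `±γ` of that equation become the shifts `0, -2γ` needed here after
moving the evaluation point by `-γ` times the total weight of the three factors, which translation
invariance permits.
-/

lemma SemiconjBy.list_prod_map {M ι : Type*} [Monoid M] {a : M} {f g : ι → M} {l : List ι}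
    (h : ∀ j ∈ l, SemiconjBy a (f j) (g j)) :
    SemiconjBy a (l.map f).prod (l.map g).prod := by
  induction l with
  | nil => exact SemiconjBy.one_right a
  | cons j l ih =>
    simp only [List.map_cons, List.prod_cons]
    exact (h j List.mem_cons_self).mul_right (ih fun j' hj' => h j' (List.mem_cons_of_mem j hj'))

section Sites

variable {N} {p : ℕ}

def AgreeOff (S : Finset (Fin p)) (σ τ : Fin p → Fin N) : Prop :=
  ∀ i ∉ S, σ i = τ i

namespace AgreeOff

variable {S T : Finset (Fin p)} {σ τ υ : Fin p → Fin N}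

lemma refl (S : Finset (Fin p)) (σ : Fin p → Fin N) : AgreeOff S σ σ :=
  fun _ _ => rfl

lemma symm (h : AgreeOff S σ τ) : AgreeOff S τ σ :=
  fun i hi => (h i hi).symm

lemma trans (h : AgreeOff S σ τ) (h' : AgreeOff S τ υ) : AgreeOff S σ υ :=
  fun i hi => (h i hi).trans (h' i hi)

lemma mono (h : AgreeOff S σ τ) (hST : S ⊆ T) : AgreeOff T σ τ :=
  fun i hi => h i fun hS => hi (hST hS)

lemma of_insert_iff {c : Fin p} (hc : c ∉ S) (h : AgreeOff (insert c S) σ τ) :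
    AgreeOff S σ τ ↔ σ c = τ c := by
  refine ⟨fun hS => hS c hc, fun hστ i hi => ?_⟩
  by_cases hic : i = c
  · exact hic ▸ hστ
  · exact h i (by simp [hic, hi])

end AgreeOff

instance (S : Finset (Fin p)) (σ τ : Fin p → Fin N) : Decidable (AgreeOff S σ τ) :=
  inferInstanceAs (Decidable (∀ i ∉ S, σ i = τ i))

def splice (S : Finset (Fin p)) (τ σ : Fin p → Fin N) : Fin p → Fin N :=
  fun i => if i ∈ S then τ i else σ i

lemma splice_of_mem {S : Finset (Fin p)} {i : Fin p} (hi : i ∈ S) (τ σ : Fin p → Fin N) :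
    splice S τ σ i = τ i :=
  if_pos hi

lemma splice_of_notMem {S : Finset (Fin p)} {i : Fin p} (hi : i ∉ S) (τ σ : Fin p → Fin N) :
    splice S τ σ i = σ i :=
  if_neg hi

lemma agreeOff_splice (S : Finset (Fin p)) (τ σ : Fin p → Fin N) :
    AgreeOff S σ (splice S τ σ) :=
  fun i hi => by simp [splice, hi]

lemma splice_agreeOff {σ τ : Fin p → Fin N} (h : AgreeOff (S ∪ T) σ τ) :
    AgreeOff T (splice S τ σ) τ := by
  intro i hi
  by_cases hiS : i ∈ S
  · simp [splice, hiS]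
  · simpa [splice, hiS] using h i (by simp [hiS, hi])

/-- Matrices on `(ℂ^N)^{⊗p}` acting only on the tensor factors in `S`. -/
def IsLocal (S : Finset (Fin p)) (X : Matrix (Fin p → Fin N) (Fin p → Fin N) ℂ) : Prop :=
  ∀ σ τ, ¬ AgreeOff S σ τ → X σ τ = 0

namespace IsLocal

variable {S T : Finset (Fin p)} {X Y : Matrix (Fin p → Fin N) (Fin p → Fin N) ℂ}

lemma mono (hX : IsLocal S X) (hST : S ⊆ T) : IsLocal T X :=
  fun σ τ h => hX σ τ fun hS => h (hS.mono hST)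

lemma mul (hX : IsLocal S X) (hY : IsLocal S Y) : IsLocal S (X * Y) := by
  intro σ τ hστ
  rw [Matrix.mul_apply]
  refine Finset.sum_eq_zero fun α _ => ?_
  by_cases hσα : AgreeOff S σ α
  · rw [hY α τ fun hατ => hστ (hσα.trans hατ), mul_zero]
  · rw [hX σ α hσα, zero_mul]

lemma mul_apply_of_disjoint (hX : IsLocal S X) (hY : IsLocal T Y) (hST : Disjoint S T)
    (σ τ : Fin p → Fin N) :
    (X * Y) σ τ = X σ (splice S τ σ) * Y (splice S τ σ) τ := by
  rw [Matrix.mul_apply]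
  refine Finset.sum_eq_single _ (fun α _ hα => ?_) (by simp)
  by_contra hne
  refine hα (funext fun i => ?_)
  have hσα : AgreeOff S σ α := by_contra fun h => hne (by rw [hX σ α h, zero_mul])
  have hατ : AgreeOff T α τ := by_contra fun h => hne (by rw [hY α τ h, mul_zero])
  by_cases hiS : i ∈ S
  · simp [splice, hiS, hατ i (Finset.disjoint_left.1 hST hiS)]
  · simp [splice, hiS, hσα i hiS]

end IsLocal

def weightOn (S : Finset (Fin p)) (σ : Fin p → Fin N) : Fin N → ℂ :=
  ∑ i ∈ S, Pi.single (σ i) 1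

def window (p s t : ℕ) : Finset (Fin p) :=
  Finset.univ.filter fun i => s ≤ (i : ℕ) ∧ (i : ℕ) < t

@[simp]
lemma mem_window {s t : ℕ} {i : Fin p} :
    i ∈ window p s t ↔ s ≤ (i : ℕ) ∧ (i : ℕ) < t := by
  simp [window]

lemma hsum_eq_weightOn (s t : ℕ) (σ : Fin p → Fin N) :
    hsum N p s t σ = weightOn (window p s t) σ := by
  rw [hsum, weightOn, window, Finset.sum_filter]

lemma weightOn_pair {a b : Fin p} (hab : a ≠ b) (σ : Fin p → Fin N) :
    weightOn {a, b} σ = Pi.single (σ a) 1 + Pi.single (σ b) 1 :=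
  Finset.sum_pair hab

lemma weightOn_union {S T : Finset (Fin p)} (hST : Disjoint S T) (σ : Fin p → Fin N) :
    weightOn (S ∪ T) σ = weightOn S σ + weightOn T σ :=
  Finset.sum_union hST

lemma hsum_eq_single_add {s t : ℕ} (hs : s < p) (hst : s < t) (σ : Fin p → Fin N) :
    hsum N p s t σ = Pi.single (σ ⟨s, hs⟩) 1 + hsum N p (s + 1) t σ := by
  have hsplit : window p s t = insert ⟨s, hs⟩ (window p (s + 1) t) := by
    ext i
    simp only [mem_window, Finset.mem_insert, Fin.ext_iff]
    omega
  rw [hsum_eq_weightOn, hsum_eq_weightOn, hsplit, weightOn, Finset.sum_insert (by simp)]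
  rfl

lemma AgreeOff.weightOn_eq_of_disjoint {S W : Finset (Fin p)} {σ τ : Fin p → Fin N}
    (h : AgreeOff S σ τ) (hSW : Disjoint S W) : weightOn W σ = weightOn W τ :=
  Finset.sum_congr rfl fun i hi => by rw [h i (Finset.disjoint_right.1 hSW hi)]

def WeightMove (S : Finset (Fin p)) (σ τ : Fin p → Fin N) : Prop :=
  AgreeOff S σ τ ∧ weightOn S σ = weightOn S τ

lemma weightOn_splice (S : Finset (Fin p)) (τ σ : Fin p → Fin N) :
    weightOn S (splice S τ σ) = weightOn S τ :=
  Finset.sum_congr rfl fun i hi => by rw [splice_of_mem hi]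

lemma WeightMove.weightOn_eq_of_subset {S W : Finset (Fin p)} {σ τ : Fin p → Fin N}
    (h : WeightMove S σ τ) (hSW : S ⊆ W) : weightOn W σ = weightOn W τ := by
  rw [← Finset.union_sdiff_of_subset hSW, weightOn_union Finset.disjoint_sdiff,
    weightOn_union Finset.disjoint_sdiff, h.2, h.1.weightOn_eq_of_disjoint Finset.disjoint_sdiff]

def MoveInvariant (S : Finset (Fin p)) (f : (Fin p → Fin N) → Fin N → ℂ) : Prop :=
  ∀ σ τ, WeightMove S σ τ → f σ = f τ

lemma WeightMove.hsum_eq {S : Finset (Fin p)} {σ τ : Fin p → Fin N} (h : WeightMove S σ τ)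
    {s t : ℕ}
    (hS : S ⊆ window p s t ∨ Disjoint S (window p s t)) :
    hsum N p s t σ = hsum N p s t τ := by
  rw [hsum_eq_weightOn, hsum_eq_weightOn]
  exact hS.elim h.weightOn_eq_of_subset h.1.weightOn_eq_of_disjoint

lemma WeightMove.hsum_add_hsum_eq {S : Finset (Fin p)} {σ τ : Fin p → Fin N}
    (h : WeightMove S σ τ) {s₁ t₁ s₂ t₂ : ℕ}
    (hdisj : Disjoint (window p s₁ t₁) (window p s₂ t₂))
    (hS : S ⊆ window p s₁ t₁ ∪ window p s₂ t₂) :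
    hsum N p s₁ t₁ σ + hsum N p s₂ t₂ σ =
      hsum N p s₁ t₁ τ + hsum N p s₂ t₂ τ := by
  simp only [hsum_eq_weightOn, ← weightOn_union hdisj, h.weightOn_eq_of_subset hS]

end Sites

section RPair

variable {N} {p : ℕ} {R : (Fin N → ℂ) → Matrix (Fin N × Fin N) (Fin N × Fin N) ℂ}

lemma RPair_apply (a b : Fin p) (f : (Fin p → Fin N) → Fin N → ℂ)
    (σ τ : Fin p → Fin N) :
    RPair N R p a b f σ τ =
      if AgreeOff {a, b} σ τ then R (f σ) (σ a, σ b) (τ a, τ b) else 0 := by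
  have hcond : (∀ i : Fin p, (i : ℕ) ≠ a → (i : ℕ) ≠ b → σ i = τ i) ↔
      AgreeOff {a, b} σ τ := by
    simp [AgreeOff, Fin.val_ne_iff, not_or, and_imp]
  simp only [RPair, Fin.is_lt, and_self, dif_pos, Fin.eta, Matrix.of_apply, hcond]

lemma RPair_isLocal (a b : Fin p) (f : (Fin p → Fin N) → Fin N → ℂ) :
    IsLocal {a, b} (RPair N R p a b f) :=
  fun σ τ h => by rw [RPair_apply, if_neg h]

def swapR (R : (Fin N → ℂ) → Matrix (Fin N × Fin N) (Fin N × Fin N) ℂ) :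
    (Fin N → ℂ) → Matrix (Fin N × Fin N) (Fin N × Fin N) ℂ :=
  fun y => Matrix.of fun q r => R y q.swap r

lemma RhatPair_eq_RPair_swapR (a b : ℕ) (f : (Fin p → Fin N) → Fin N → ℂ) :
    RhatPair N R p a b f = RPair N (swapR R) p a b f := by
  unfold RhatPair RPair swapR
  split_ifs <;> rfl

lemma ZeroWeight.swapR (hzw : ZeroWeight N R) : ZeroWeight N (swapR R) :=
  fun x i j k l hne => hzw x j i k l fun h => hne (by rw [add_comm, h])

lemma ZeroWeight.apply_eq_zero_of_weightOn_ne (hzw : ZeroWeight N R) {a b : Fin p} (hab : a ≠ b)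
    {σ τ : Fin p → Fin N} (h : weightOn {a, b} σ ≠ weightOn {a, b} τ) (y : Fin N → ℂ) :
    R y (σ a, σ b) (τ a, τ b) = 0 :=
  hzw y _ _ _ _ (by rwa [weightOn_pair hab, weightOn_pair hab] at h)

lemma RPair_commute {R' : (Fin N → ℂ) → Matrix (Fin N × Fin N) (Fin N × Fin N) ℂ}
    (hzw : ZeroWeight N R) (hzw' : ZeroWeight N R') {a b c d : Fin p} (hab : a ≠ b)
    (hcd : c ≠ d)
    (hdisj : Disjoint ({a, b} : Finset (Fin p)) {c, d}) {f g : (Fin p → Fin N) → Fin N → ℂ}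
    (hf : MoveInvariant {c, d} f) (hg : MoveInvariant {a, b} g) :
    Commute (RPair N R p a b f) (RPair N R' p c d g) := by
  have hS : IsLocal ({a, b} ∪ {c, d}) (RPair N R p a b f) :=
    (RPair_isLocal a b f).mono Finset.subset_union_left
  have hT : IsLocal ({a, b} ∪ {c, d}) (RPair N R' p c d g) :=
    (RPair_isLocal c d g).mono Finset.subset_union_right
  ext σ τ
  by_cases hστ : AgreeOff ({a, b} ∪ {c, d}) σ τ
  swap
  · rw [hS.mul hT σ τ hστ, hT.mul hS σ τ hστ]
  rw [IsLocal.mul_apply_of_disjoint (RPair_isLocal a b f) (RPair_isLocal c d g) hdisj,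
    IsLocal.mul_apply_of_disjoint (RPair_isLocal c d g) (RPair_isLocal a b f) hdisj.symm]
  have hSα := agreeOff_splice {a, b} τ σ
  have hTβ := agreeOff_splice {c, d} τ σ
  have hTα := splice_agreeOff hστ
  have hSβ := splice_agreeOff (Finset.union_comm {a, b} {c, d} ▸ hστ)
  have hcS : c ∉ ({a, b} : Finset (Fin p)) := Finset.disjoint_right.1 hdisj (by simp)
  have hdS : d ∉ ({a, b} : Finset (Fin p)) := Finset.disjoint_right.1 hdisj (by simp)
  have haT : a ∉ ({c, d} : Finset (Fin p)) := Finset.disjoint_left.1 hdisj (by simp)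
  have hbT : b ∉ ({c, d} : Finset (Fin p)) := Finset.disjoint_left.1 hdisj (by simp)
  simp only [RPair_apply, if_pos hSα, if_pos hTβ, if_pos hTα, if_pos hSβ,
    splice_of_mem (show a ∈ ({a, b} : Finset (Fin p)) by simp),
    splice_of_mem (show b ∈ ({a, b} : Finset (Fin p)) by simp),
    splice_of_mem (show c ∈ ({c, d} : Finset (Fin p)) by simp),
    splice_of_mem (show d ∈ ({c, d} : Finset (Fin p)) by simp),
    splice_of_notMem hcS, splice_of_notMem hdS, splice_of_notMem haT, splice_of_notMem hbT]
  -- Unless the pair weights are conserved the `R`-entries vanish; if they are, the spliced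
  -- configurations are weight moves, invisible to the evaluation points.
  by_cases wS : weightOn {a, b} σ = weightOn {a, b} τ
  swap
  · simp [hzw.apply_eq_zero_of_weightOn_ne hab wS]
  by_cases wT : weightOn {c, d} σ = weightOn {c, d} τ
  swap
  · simp [hzw'.apply_eq_zero_of_weightOn_ne hcd wT]
  rw [hg σ _ ⟨hSα, wS.trans (weightOn_splice _ τ σ).symm⟩,
    hf σ _ ⟨hTβ, wT.trans (weightOn_splice _ τ σ).symm⟩, mul_comm]

end RPair

section Hexagon

variable {N} {γ} {R : (Fin N → ℂ) → Matrix (Fin N × Fin N) (Fin N × Fin N) ℂ}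

local notation "Mat₃" => Matrix (Fin N × Fin N × Fin N) (Fin N × Fin N × Fin N) ℂ

/-- `R̂ = P R` in factors 2, 3 of `(ℂ^N)^{⊗3}`, argument shifted by `s h^{(1)}`. -/
def Phat23 (R : (Fin N → ℂ) → Matrix (Fin N × Fin N) (Fin N × Fin N) ℂ)
    (x : Fin N → ℂ) (s : ℂ) : Mat₃ :=
  fun ρ κ => if ρ.1 = κ.1 then
    R (x + s • (Pi.single κ.1 1 : Fin N → ℂ)) (ρ.2.2, ρ.2.1) (κ.2.1, κ.2.2) else 0

def swap23 : (Fin N × Fin N × Fin N) ≃ (Fin N × Fin N × Fin N) :=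
  Equiv.prodCongr (Equiv.refl _) (Equiv.prodComm _ _)

/-- Conjugating the dynamical Yang–Baxter equation by `P_{23}`. -/
lemma DYBE.hexagon (hybe : DYBE N γ R) (x : Fin N → ℂ) :
    sh13 N R x γ * sh12 N R x (-γ) * Phat23 R x γ =
      Phat23 R x (-γ) * (sh13 N R x γ * sh12 N R x (-γ)) := by
  have h12 (s : ℂ) : (sh12 N R x s).submatrix swap23 swap23 = sh13 N R x s := rfl
  have h13 (s : ℂ) : (sh13 N R x s).submatrix swap23 swap23 = sh12 N R x s := rfl
  have h23 (s : ℂ) : (sh23 N R x s).submatrix swap23 id = Phat23 R x s := rfl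
  calc sh13 N R x γ * sh12 N R x (-γ) * Phat23 R x γ
      = (sh12 N R x γ * sh13 N R x (-γ) * sh23 N R x γ).submatrix swap23 id := by
        rw [← h12 γ, ← h13 (-γ), ← h23 γ, Matrix.submatrix_mul_equiv,
          Matrix.submatrix_mul_equiv]
    _ = (sh23 N R x (-γ) * (sh13 N R x γ * sh12 N R x (-γ))).submatrix swap23 id := by
        rw [hybe x, mul_assoc]
    _ = Phat23 R x (-γ) * (sh13 N R x γ * sh12 N R x (-γ)) := by
        rw [← h23, ← Matrix.submatrix_mul_equiv _ _ swap23 (Equiv.refl _) id]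
        rfl

def tripleWeight (ρ : Fin N × Fin N × Fin N) : Fin N → ℂ :=
  Pi.single ρ.1 1 + Pi.single ρ.2.1 1 + Pi.single ρ.2.2 1

def IsWeightPreserving (A : Mat₃) : Prop :=
  ∀ ρ κ, tripleWeight ρ ≠ tripleWeight κ → A ρ κ = 0

lemma sh12_isWeightPreserving (hzw : ZeroWeight N R) (x : Fin N → ℂ) (s : ℂ) :
    IsWeightPreserving (sh12 N R x s) := by
  intro ρ κ hw
  unfold sh12
  split_ifs with h
  · exact hzw _ _ _ _ _ fun hR => hw (by rw [tripleWeight, tripleWeight, h]; linear_combination hR)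
  · rfl

lemma sh13_isWeightPreserving (hzw : ZeroWeight N R) (x : Fin N → ℂ) (s : ℂ) :
    IsWeightPreserving (sh13 N R x s) := by
  intro ρ κ hw
  unfold sh13
  split_ifs with h
  · exact hzw _ _ _ _ _ fun hR => hw (by rw [tripleWeight, tripleWeight, h]; linear_combination hR)
  · rfl

lemma Phat23_isWeightPreserving (hzw : ZeroWeight N R) (x : Fin N → ℂ) (s : ℂ) :
    IsWeightPreserving (Phat23 R x s) := by
  intro ρ κ hw
  unfold Phat23
  split_ifs with h
  · exact hzw _ _ _ _ _ fun hR => hw (by rw [tripleWeight, tripleWeight, h]; linear_combination hR)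
  · rfl

lemma IsWeightPreserving.mul {A B : Mat₃} (hA : IsWeightPreserving A)
    (hB : IsWeightPreserving B) : IsWeightPreserving (A * B) := by
  intro ρ κ hρκ
  rw [Matrix.mul_apply]
  refine Finset.sum_eq_zero fun α _ => ?_
  by_cases hρα : tripleWeight ρ = tripleWeight α
  · rw [hB α κ (hρα ▸ hρκ), mul_zero]
  · rw [hA ρ α hρα, zero_mul]

variable (γ) in
def shiftByWeight (A : (Fin N → ℂ) → Mat₃) (y : Fin N → ℂ) : Mat₃ :=
  Matrix.of fun ρ κ => A (y - γ • tripleWeight ρ) ρ κ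

lemma shiftByWeight_mul {A B : (Fin N → ℂ) → Mat₃} (hA : ∀ x, IsWeightPreserving (A x))
    (y : Fin N → ℂ) :
    shiftByWeight γ (A * B) y = shiftByWeight γ A y * shiftByWeight γ B y := by
  ext ρ κ
  simp only [shiftByWeight, Matrix.of_apply, Pi.mul_apply, Matrix.mul_apply]
  refine Finset.sum_congr rfl fun α _ => ?_
  by_cases hρα : tripleWeight ρ = tripleWeight α
  · rw [hρα]
  · rw [hA _ ρ α hρα, zero_mul, zero_mul]

lemma shiftByWeight_sh12 (htr : TransInv N R) (t : ℂ) (y : Fin N → ℂ) :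
    shiftByWeight γ (fun x => sh12 N R x (t + γ)) y = sh12 N R y t := by
  ext ρ κ
  simp only [shiftByWeight, Matrix.of_apply, sh12]
  split_ifs with h
  · rw [← htr (y + t • Pi.single κ.2.2 1) (-γ)]
    congr 1
    simp only [tripleWeight, h]
    module
  · rfl

lemma shiftByWeight_sh13 (htr : TransInv N R) (t : ℂ) (y : Fin N → ℂ) :
    shiftByWeight γ (fun x => sh13 N R x (t + γ)) y = sh13 N R y t := by
  ext ρ κ
  simp only [shiftByWeight, Matrix.of_apply, sh13]
  split_ifs with h
  · rw [← htr (y + t • Pi.single κ.2.1 1) (-γ)]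
    congr 1
    simp only [tripleWeight, h]
    module
  · rfl

lemma shiftByWeight_Phat23 (htr : TransInv N R) (t : ℂ) (y : Fin N → ℂ) :
    shiftByWeight γ (fun x => Phat23 R x (t + γ)) y = Phat23 R y t := by
  ext ρ κ
  simp only [shiftByWeight, Matrix.of_apply, Phat23]
  split_ifs with h
  · rw [← htr (y + t • Pi.single κ.1 1) (-γ)]
    congr 1
    simp only [tripleWeight, h]
    module
  · rfl

/-- `DYBE.hexagon` at the base point `y - γ • tripleWeight ρ` in row `ρ`, rewritten by
translation invariance. -/
lemma DYBE.shifted_hexagon (hzw : ZeroWeight N R) (htr : TransInv N R) (hybe : DYBE N γ R)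
    (y : Fin N → ℂ) :
    Phat23 R y (-(2 * γ)) * (sh13 N R y 0 * sh12 N R y (-(2 * γ))) =
      sh13 N R y 0 * sh12 N R y (-(2 * γ)) * Phat23 R y 0 := by
  have hγ : -(2 * γ) + γ = -γ := by ring
  have e12 := shiftByWeight_sh12 (γ := γ) htr (-(2 * γ)) y
  have e13 := shiftByWeight_sh13 (γ := γ) htr 0 y
  have eP := shiftByWeight_Phat23 (γ := γ) htr (-(2 * γ)) y
  have eP' := shiftByWeight_Phat23 (γ := γ) htr 0 y
  rw [hγ] at e12 eP
  rw [zero_add] at e13 eP'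
  rw [← e12, ← e13, ← eP, ← eP', ← shiftByWeight_mul (sh13_isWeightPreserving hzw · γ),
    ← shiftByWeight_mul (Phat23_isWeightPreserving hzw · (-γ)),
    ← shiftByWeight_mul (A := (sh13 N R · γ) * (sh12 N R · (-γ))) fun x =>
      (sh13_isWeightPreserving hzw x γ).mul (sh12_isWeightPreserving hzw x (-γ))]
  exact congrArg (shiftByWeight γ · y) (funext fun x => (hybe.hexagon x).symm)

end Hexagon

section Lift

variable {N} {γ} {p : ℕ} {u v w : Fin p}
  {R : (Fin N → ℂ) → Matrix (Fin N × Fin N) (Fin N × Fin N) ℂ}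

local notation "Mat₃" => Matrix (Fin N × Fin N × Fin N) (Fin N × Fin N × Fin N) ℂ

def proj3 (u v w : Fin p) (σ : Fin p → Fin N) : Fin N × Fin N × Fin N :=
  (σ u, σ v, σ w)

def embed3 (u v w : Fin p) (σ₀ : Fin p → Fin N) (t : Fin N × Fin N × Fin N) :
    Fin p → Fin N :=
  Function.update (Function.update (Function.update σ₀ w t.2.2) v t.2.1) u t.1

lemma proj3_embed3 (huv : u ≠ v) (huw : u ≠ w) (hvw : v ≠ w) (σ₀ : Fin p → Fin N)
    (t : Fin N × Fin N × Fin N) : proj3 u v w (embed3 u v w σ₀ t) = t := by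
  simp [proj3, embed3, huv.symm, huw.symm, hvw.symm]

lemma agreeOff_embed3 (σ₀ : Fin p → Fin N) (t : Fin N × Fin N × Fin N) :
    AgreeOff {u, v, w} σ₀ (embed3 u v w σ₀ t) := by
  intro i hi
  simp only [Finset.mem_insert, Finset.mem_singleton, not_or] at hi
  simp [embed3, hi.1, hi.2.1, hi.2.2]

lemma embed3_proj3 {σ₀ α : Fin p → Fin N} (h : AgreeOff {u, v, w} σ₀ α) :
    embed3 u v w σ₀ (proj3 u v w α) = α := by
  funext i
  by_cases hu : i = u
  · subst hu; simp [embed3, proj3]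
  by_cases hv : i = v
  · subst hv; simp [embed3, proj3, hu]
  by_cases hw : i = w
  · subst hw; simp [embed3, proj3, hu, hv]
  simp [embed3, hu, hv, hw, h i (by simp [hu, hv, hw])]

lemma IsLocal.mul_apply_eq_sum_embed3 (huv : u ≠ v) (huw : u ≠ w) (hvw : v ≠ w)
    {X : Matrix (Fin p → Fin N) (Fin p → Fin N) ℂ} (hX : IsLocal {u, v, w} X)
    (Y : Matrix (Fin p → Fin N) (Fin p → Fin N) ℂ) {σ₀ σ : Fin p → Fin N}
    (hσ : AgreeOff {u, v, w} σ₀ σ) (τ : Fin p → Fin N) :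
    (X * Y) σ τ = ∑ t, X σ (embed3 u v w σ₀ t) * Y (embed3 u v w σ₀ t) τ := by
  rw [Matrix.mul_apply]
  refine (Fintype.sum_of_injective _ (Function.LeftInverse.injective
    (proj3_embed3 huv huw hvw σ₀)) _ _ (fun α hα => ?_) fun _ => rfl).symm
  have hσα : ¬ AgreeOff {u, v, w} σ α := fun h =>
    hα ⟨proj3 u v w α, embed3_proj3 (hσ.trans h)⟩
  rw [hX σ α hσα, zero_mul]

def IsLiftOf (u v w : Fin p) (σ₀ : Fin p → Fin N)
    (X : Matrix (Fin p → Fin N) (Fin p → Fin N) ℂ) (A : Mat₃) : Prop :=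
  IsLocal {u, v, w} X ∧ ∀ σ τ, AgreeOff {u, v, w} σ₀ σ → AgreeOff {u, v, w} σ₀ τ →
    X σ τ = A (proj3 u v w σ) (proj3 u v w τ)

lemma IsLiftOf.mul (huv : u ≠ v) (huw : u ≠ w) (hvw : v ≠ w) {σ₀ : Fin p → Fin N}
    {X Y : Matrix (Fin p → Fin N) (Fin p → Fin N) ℂ} {A B : Mat₃}
    (hX : IsLiftOf u v w σ₀ X A) (hY : IsLiftOf u v w σ₀ Y B) :
    IsLiftOf u v w σ₀ (X * Y) (A * B) := by
  refine ⟨hX.1.mul hY.1, fun σ τ hσ hτ => ?_⟩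
  rw [hX.1.mul_apply_eq_sum_embed3 huv huw hvw Y hσ, Matrix.mul_apply]
  refine Finset.sum_congr rfl fun t _ => ?_
  rw [hX.2 _ _ hσ (agreeOff_embed3 σ₀ t), hY.2 _ _ (agreeOff_embed3 σ₀ t) hτ,
    proj3_embed3 huv huw hvw]

lemma isLiftOf_RPair_sh13 (hv : v ∉ ({u, w} : Finset (Fin p))) {σ₀ : Fin p → Fin N}
    {f : (Fin p → Fin N) → Fin N → ℂ} {y : Fin N → ℂ} {s : ℂ}
    (hf : ∀ σ, AgreeOff {u, v, w} σ₀ σ → f σ = y + s • Pi.single (σ v) 1) :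
    IsLiftOf u v w σ₀ (RPair N R p u w f) (sh13 N R y s) := by
  have hS : ({u, v, w} : Finset (Fin p)) = insert v {u, w} := Finset.insert_comm u v {w}
  refine ⟨(RPair_isLocal u w f).mono (by rw [hS]; exact Finset.subset_insert _ _),
    fun σ τ hσ hτ => ?_⟩
  simp only [RPair_apply, (hS ▸ hσ.symm.trans hτ :).of_insert_iff hv, hf σ hσ]
  simp only [sh13, proj3]
  split_ifs with h <;> simp [h]

lemma isLiftOf_RPair_sh12 (hw : w ∉ ({u, v} : Finset (Fin p))) {σ₀ : Fin p → Fin N}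
    {f : (Fin p → Fin N) → Fin N → ℂ} {y : Fin N → ℂ} {s : ℂ}
    (hf : ∀ σ, AgreeOff {u, v, w} σ₀ σ → f σ = y + s • Pi.single (σ w) 1) :
    IsLiftOf u v w σ₀ (RPair N R p u v f) (sh12 N R y s) := by
  have hS : ({u, v, w} : Finset (Fin p)) = insert w {u, v} := by
    ext; simp only [Finset.mem_insert, Finset.mem_singleton]; tauto
  refine ⟨(RPair_isLocal u v f).mono (by rw [hS]; exact Finset.subset_insert _ _),
    fun σ τ hσ hτ => ?_⟩
  simp only [RPair_apply, (hS ▸ hσ.symm.trans hτ :).of_insert_iff hw, hf σ hσ]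
  simp only [sh12, proj3]
  split_ifs with h <;> simp [h]

lemma isLiftOf_RPair_Phat23 (hu : u ∉ ({v, w} : Finset (Fin p))) {σ₀ : Fin p → Fin N}
    {f : (Fin p → Fin N) → Fin N → ℂ} {y : Fin N → ℂ} {s : ℂ}
    (hf : ∀ σ, AgreeOff {u, v, w} σ₀ σ → f σ = y + s • Pi.single (σ u) 1) :
    IsLiftOf u v w σ₀ (RPair N (swapR R) p v w f) (Phat23 R y s) := by
  refine ⟨(RPair_isLocal v w f).mono (Finset.subset_insert _ _), fun σ τ hσ hτ => ?_⟩
  simp only [RPair_apply, (hσ.symm.trans hτ).of_insert_iff hu, hf σ hσ]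
  simp only [Phat23, proj3, swapR]
  split_ifs with h <;> simp [h]

lemma RhatPair_mul_RPair_mul_RPair (hzw : ZeroWeight N R) (htr : TransInv N R)
    (hybe : DYBE N γ R) (huv : u ≠ v) (huw : u ≠ w) (hvw : v ≠ w)
    {g : (Fin p → Fin N) → Fin N → ℂ}
    (hg : ∀ σ τ, AgreeOff {u, v, w} σ τ → g σ = g τ) :
    RhatPair N R p v w (fun σ => g σ - (2 * γ) • Pi.single (σ u) 1) *
        (RPair N R p u w g * RPair N R p u v (fun σ => g σ - (2 * γ) • Pi.single (σ w) 1)) =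
      RPair N R p u w g * RPair N R p u v (fun σ => g σ - (2 * γ) • Pi.single (σ w) 1) *
        RhatPair N R p v w g := by
  rw [RhatPair_eq_RPair_swapR, RhatPair_eq_RPair_swapR]
  ext σ τ
  have hshift (z : Fin p → Fin N) (i : Fin p) (hz : AgreeOff {u, v, w} σ z) :
      g z - (2 * γ) • (Pi.single (z i) 1 : Fin N → ℂ) =
        g σ + -(2 * γ) • Pi.single (z i) 1 := by
    rw [hg σ z hz, neg_smul, sub_eq_add_neg]
  have L₁ : IsLiftOf u v w σ (RPair N (swapR R) p v w _) (Phat23 R (g σ) (-(2 * γ))) :=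
    isLiftOf_RPair_Phat23 (by simp [huv, huw]) fun z hz => hshift z u hz
  have L₂ : IsLiftOf u v w σ (RPair N R p u w g) (sh13 N R (g σ) 0) :=
    isLiftOf_RPair_sh13 (by simp [huv.symm, hvw]) fun z hz => by simp [hg σ z hz]
  have L₃ : IsLiftOf u v w σ (RPair N R p u v _) (sh12 N R (g σ) (-(2 * γ))) :=
    isLiftOf_RPair_sh12 (by simp [huw.symm, hvw.symm]) fun z hz => hshift z w hz
  have L₄ : IsLiftOf u v w σ (RPair N (swapR R) p v w g) (Phat23 R (g σ) 0) :=
    isLiftOf_RPair_Phat23 (by simp [huv, huw]) fun z hz => by simp [hg σ z hz]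
  have L := L₁.mul huv huw hvw (L₂.mul huv huw hvw L₃)
  have L' := (L₂.mul huv huw hvw L₃).mul huv huw hvw L₄
  by_cases hστ : AgreeOff {u, v, w} σ τ
  · rw [L.2 σ τ (.refl _ σ) hστ, L'.2 σ τ (.refl _ σ) hστ,
      hybe.shifted_hexagon hzw htr (g σ)]
  · rw [L.1 σ τ hστ, L'.1 σ τ hστ]

end Lift

section TQ

variable {N} {γ} {R : (Fin N → ℂ) → Matrix (Fin N × Fin N) (Fin N × Fin N) ℂ}
  {n m i : ℕ} {x : Fin N → ℂ}

variable (γ) in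
/-- The factor `R_{i,n+j}(x − 2γh^{(i+1,n)} − 2γh^{(n+j+1,n+m)})` of `Q_i(x)`. -/
def Qfactor (R : (Fin N → ℂ) → Matrix (Fin N × Fin N) (Fin N × Fin N) ℂ) (n m i : ℕ)
    (x : Fin N → ℂ) (j : ℕ) : Matrix (Fin (n + m) → Fin N) (Fin (n + m) → Fin N) ℂ :=
  RPair N R (n + m) (i - 1) (n + j - 1)
    (fun σ => x - (2 * γ) • hsum N (n + m) i n σ -
      (2 * γ) • hsum N (n + m) (n + j) (n + m) σ)

variable (γ) in
/-- The factor `R̂_{j,j+1}(x − 2γh^{(i,n)} − 2γh^{(j+2,n+m)})` of `T_i(x)`. -/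
def Tfactor (R : (Fin N → ℂ) → Matrix (Fin N × Fin N) (Fin N × Fin N) ℂ) (n m i : ℕ)
    (x : Fin N → ℂ) (j : ℕ) : Matrix (Fin (n + m) → Fin N) (Fin (n + m) → Fin N) ℂ :=
  RhatPair N R (n + m) (j - 1) j
    (fun σ => x - (2 * γ) • hsum N (n + m) (i - 1) n σ -
      (2 * γ) • hsum N (n + m) (j + 1) (n + m) σ)

lemma Tmat_eq_prod :
    Tmat N γ R n m i x = ((List.range' (n + 1) (m - 1)).map (Tfactor γ R n m i x)).prod := by
  rw [Tmat, calI, show n + m - (n + 1) = m - 1 by omega]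
  rfl

lemma Qmat_eq_split {k : ℕ} (hk : 1 ≤ k) (hkm : k < m) :
    Qmat N γ R n m i x =
      ((List.range' (k + 2) (m - k - 1)).reverse.map (Qfactor γ R n m i x)).prod *
        (Qfactor γ R n m i x (k + 1) * Qfactor γ R n m i x k) *
        ((List.range' 1 (k - 1)).reverse.map (Qfactor γ R n m i x)).prod := by
  have hsplit : List.range' 1 m = List.range' 1 (k - 1) ++ List.range' (1 + (k - 1)) 2 ++
      List.range' (1 + (k - 1 + 2)) (m - k - 1) := by
    rw [List.range'_append_1, List.range'_append_1]
    congr 1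
    omega
  rw [show 1 + (k - 1) = k by omega, show 1 + (k - 1 + 2) = k + 2 by omega] at hsplit
  change ((List.range' 1 m).reverse.map (Qfactor γ R n m i x)).prod = _
  rw [hsplit]
  simp [List.range'_succ, mul_assoc]

lemma Tfactor_commute_Qfactor_of_lt (hzw : ZeroWeight N R) (hi : 1 ≤ i) (hin : i ≤ n)
    {k j : ℕ} (hk : 1 ≤ k) (hkj : k + 2 ≤ j) (hjm : j ≤ m) :
    Commute (Tfactor γ R n m i x (n + k)) (Qfactor γ R n m i x j) := by
  rw [Tfactor, RhatPair_eq_RPair_swapR]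
  refine RPair_commute (a := ⟨n + k - 1, by omega⟩) (b := ⟨n + k, by omega⟩)
    (c := ⟨i - 1, by omega⟩) (d := ⟨n + j - 1, by omega⟩) hzw.swapR hzw
    (by simp [Fin.ext_iff]; omega) (by simp [Fin.ext_iff]; omega)
    (by simp [Fin.ext_iff]; omega) (fun σ τ h => ?_) (fun σ τ h => ?_)
  -- The sites of the `Q`-factor lie one in each window of the shift: only the sum is invariant.
  · rw [sub_sub, sub_sub, ← smul_add, ← smul_add, h.hsum_add_hsum_eq
      (Finset.disjoint_left.2 fun z hz hz' => by simp at hz hz'; omega)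
      (by simp [Finset.insert_subset_iff]; omega)]
  · rw [h.hsum_eq (s := i) (t := n) (.inr (by simp [Finset.disjoint_insert_left]; omega)),
      h.hsum_eq (s := n + j) (t := n + m) (.inr (by simp [Finset.disjoint_insert_left]; omega))]

lemma Tfactor_commute_Qfactor_of_gt (hzw : ZeroWeight N R) (hi : 1 ≤ i) (hin : i ≤ n)
    {k j : ℕ} (hj : 1 ≤ j) (hjk : j + 1 ≤ k) (hkm : k < m) :
    Commute (Tfactor γ R n m (i + 1) x (n + k)) (Qfactor γ R n m i x j) := by
  rw [Tfactor, RhatPair_eq_RPair_swapR]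
  refine RPair_commute (a := ⟨n + k - 1, by omega⟩) (b := ⟨n + k, by omega⟩)
    (c := ⟨i - 1, by omega⟩) (d := ⟨n + j - 1, by omega⟩) hzw.swapR hzw
    (by simp [Fin.ext_iff]; omega) (by simp [Fin.ext_iff]; omega)
    (by simp [Fin.ext_iff]; omega) (fun σ τ h => ?_) (fun σ τ h => ?_)
  · rw [h.hsum_eq (s := i + 1 - 1) (t := n) (.inr (by simp [Finset.disjoint_insert_left]; omega)),
      h.hsum_eq (s := n + k + 1) (t := n + m)
        (.inr (by simp [Finset.disjoint_insert_left]; omega))]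
  · rw [h.hsum_eq (s := i) (t := n) (.inr (by simp [Finset.disjoint_insert_left]; omega)),
      h.hsum_eq (s := n + j) (t := n + m) (.inl (by simp [Finset.insert_subset_iff]; omega))]

lemma Tfactor_mul_Qfactor_mul_Qfactor (hzw : ZeroWeight N R) (htr : TransInv N R)
    (hybe : DYBE N γ R) (hi : 1 ≤ i) (hin : i ≤ n) {k : ℕ} (hk : 1 ≤ k) (hkm : k < m) :
    Tfactor γ R n m i x (n + k) * (Qfactor γ R n m i x (k + 1) * Qfactor γ R n m i x k) =
      Qfactor γ R n m i x (k + 1) * Qfactor γ R n m i x k *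
        Tfactor γ R n m (i + 1) x (n + k) := by
  set u : Fin (n + m) := ⟨i - 1, by omega⟩
  set v : Fin (n + m) := ⟨n + k - 1, by omega⟩
  set w : Fin (n + m) := ⟨n + k, by omega⟩
  set g : (Fin (n + m) → Fin N) → Fin N → ℂ := fun σ =>
    x - (2 * γ) • hsum N (n + m) i n σ - (2 * γ) • hsum N (n + m) (n + k + 1) (n + m) σ
  have hT : Tfactor γ R n m i x (n + k) =
      RhatPair N R (n + m) v w (fun σ => g σ - (2 * γ) • Pi.single (σ u) 1) := by
    refine congrArg _ (funext fun σ => ?_)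
    rw [hsum_eq_single_add (s := i - 1) (by omega) (by omega), Nat.sub_add_cancel hi]
    module
  have hT' : Tfactor γ R n m (i + 1) x (n + k) = RhatPair N R (n + m) v w g := by
    simp only [Tfactor, Nat.add_sub_cancel, g, v, w]
  have hQ : Qfactor γ R n m i x (k + 1) = RPair N R (n + m) u w g := by
    simp only [Qfactor, g, u, w, ← add_assoc, Nat.add_sub_cancel]
  have hQ' : Qfactor γ R n m i x k =
      RPair N R (n + m) u v (fun σ => g σ - (2 * γ) • Pi.single (σ w) 1) := by
    refine congrArg _ (funext fun σ => ?_)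
    rw [hsum_eq_single_add (s := n + k) (by omega) (by omega)]
    module
  rw [hT, hT', hQ, hQ']
  refine RhatPair_mul_RPair_mul_RPair hzw htr hybe (by simp [u, v, Fin.ext_iff]; omega)
    (by simp [u, w, Fin.ext_iff]; omega) (by simp [v, w, Fin.ext_iff]; omega) fun σ τ h => ?_
  simp only [g, hsum_eq_weightOn]
  rw [h.weightOn_eq_of_disjoint (W := window (n + m) i n)
      (by simp [Finset.disjoint_insert_left, u, v, w]; omega),
    h.weightOn_eq_of_disjoint (W := window (n + m) (n + k + 1) (n + m))
      (by simp [Finset.disjoint_insert_left, u, v, w]; omega)]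

lemma Tfactor_mul_Qmat (hzw : ZeroWeight N R) (htr : TransInv N R) (hybe : DYBE N γ R)
    (hi : 1 ≤ i) (hin : i ≤ n) {k : ℕ} (hk : 1 ≤ k) (hkm : k < m) :
    Tfactor γ R n m i x (n + k) * Qmat N γ R n m i x =
      Qmat N γ R n m i x * Tfactor γ R n m (i + 1) x (n + k) := by
  set T := Tfactor γ R n m i x (n + k)
  set T' := Tfactor γ R n m (i + 1) x (n + k)
  set M := Qfactor γ R n m i x (k + 1) * Qfactor γ R n m i x k
  have hM : T * M = M * T' := Tfactor_mul_Qfactor_mul_Qfactor hzw htr hybe hi hin hk hkm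
  set QL := ((List.range' (k + 2) (m - k - 1)).reverse.map (Qfactor γ R n m i x)).prod
  set QR := ((List.range' 1 (k - 1)).reverse.map (Qfactor γ R n m i x)).prod
  have hL : Commute T QL := by
    refine Commute.list_prod_right _ _ fun y hy => ?_
    obtain ⟨j, hj, rfl⟩ := List.mem_map.1 hy
    rw [List.mem_reverse, List.mem_range'_1] at hj
    exact Tfactor_commute_Qfactor_of_lt hzw hi hin hk hj.1 (by omega)
  have hR : Commute T' QR := by
    refine Commute.list_prod_right _ _ fun y hy => ?_
    obtain ⟨j, hj, rfl⟩ := List.mem_map.1 hy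
    rw [List.mem_reverse, List.mem_range'_1] at hj
    exact Tfactor_commute_Qfactor_of_gt hzw hi hin hj.1 (by omega) hkm
  rw [Qmat_eq_split hk hkm]
  calc T * (QL * M * QR)
      = QL * (T * M) * QR := by rw [← mul_assoc, ← mul_assoc, hL.eq, mul_assoc QL]
    _ = QL * M * (T' * QR) := by rw [hM]; simp only [mul_assoc]
    _ = QL * M * QR * T' := by rw [hR.eq]; simp only [mul_assoc]

end TQ

theorem lemma3_TQ_eq_QT
    (R : (Fin N → ℂ) → Matrix (Fin N × Fin N) (Fin N × Fin N) ℂ)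
    (hzw : ZeroWeight N R) (htr : TransInv N R) (hybe : DYBE N γ R)
    (n m : ℕ)
    (x : Fin N → ℂ) (i : ℕ) (hi1 : 1 ≤ i) (hin : i ≤ n) :
    Tmat N γ R n m i x * Qmat N γ R n m i x =
      Qmat N γ R n m i x * Tmat N γ R n m (i + 1) x := by
  rw [Tmat_eq_prod, Tmat_eq_prod]
  refine (SemiconjBy.list_prod_map fun j hj => ?_).symm
  rw [List.mem_range'_1] at hj
  obtain ⟨k, rfl⟩ : ∃ k, j = n + k := ⟨j - n, by omega⟩
  exact (Tfactor_mul_Qmat hzw htr hybe hi1 hin (by omega) (by omega)).symm
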